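/- arXiv:2510.26712 — 2 statements merged into one kernel-verified Lean document; each statement's English description precedes it below -/
import Mathlib

section
/- Let H ∈ ℝ^{s×n}, b ∈ ℝ^{s}, z ∈ ℝ^{n}, let Δ₁, …, Δ_r ∈ ℝ^{n×q} be entrywise nonnegative and ξ₁, …, ξ_r ∈ ℝ^{q}. Define the set ℬ = {Σ_{i=1}^{r} E_i ξ_i : E_i ∈ ℝ^{n×q}, |E_i| ≤ Δ_i entrywise for each i}. Then {z} ⊕ ℬ ⊆ {x ∈ ℝ^{n} : Hx ≤ b} if and only if Hz + |H| Σ_{i=1}^{r} Δ_i |ξ_i| ≤ b componentwise. -/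
/-!
Each row of `H(z + w)` is at most `(Hz)ₖ + |Hₖ| Σᵢ Δᵢ|ξᵢ|` by the triangle inequality, which gives
sufficiency. For necessity, fix a row `k` and take `Eᵢ = diag(sign Hₖ) Δᵢ diag(sign ξᵢ)`: every
term of `Hₖ Σᵢ Eᵢξᵢ` is then nonnegative, so the triangle inequality is an equality and the
bound is attained.
-/

def eabs {p q : Type*} (M : Matrix p q ℝ) : Matrix p q ℝ := fun i j => |M i j|

open Matrix

variable {ι m n p : Type*}

lemma mulVec_le_eabs_mulVec_abs [Fintype n] (M : Matrix m n ℝ) (v : n → ℝ) :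
    M *ᵥ v ≤ eabs M *ᵥ fun j => |v j| := fun _ =>
  Finset.sum_le_sum fun _ _ => (le_abs_self _).trans (abs_mul _ _).le

lemma eabs_mulVec_mono [Fintype n] (M : Matrix m n ℝ) {u v : n → ℝ} (huv : u ≤ v) :
    eabs M *ᵥ u ≤ eabs M *ᵥ v := fun k =>
  dotProduct_le_dotProduct_of_nonneg_left huv fun j => abs_nonneg (M k j)

lemma abs_mulVec_le_mulVec_abs [Fintype n] {E Δ : Matrix m n ℝ} (hE : ∀ a c, |E a c| ≤ Δ a c)
    (x : n → ℝ) (a : m) : |(E *ᵥ x) a| ≤ (Δ *ᵥ fun c => |x c|) a :=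
  (Finset.abs_sum_le_sum_abs _ _).trans <| Finset.sum_le_sum fun c _ =>
    (abs_mul _ _).trans_le (mul_le_mul_of_nonneg_right (hE a c) (abs_nonneg _))

lemma abs_sum_mulVec_le [Fintype ι] [Fintype n] {E Δ : ι → Matrix m n ℝ}
    (hE : ∀ i a c, |E i a c| ≤ Δ i a c) (ξ : ι → n → ℝ) :
    (fun a => |(∑ i, E i *ᵥ ξ i) a|) ≤ ∑ i, Δ i *ᵥ fun c => |ξ i c| := fun a => by
  simp only [Finset.sum_apply]
  exact (Finset.abs_sum_le_sum_abs _ _).trans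
    (Finset.sum_le_sum fun i _ => abs_mulVec_le_mulVec_abs (hE i) (ξ i) a)

lemma mulVec_sum_mulVec_le [Fintype ι] [Fintype m] [Fintype n] (H : Matrix p m ℝ)
    {E Δ : ι → Matrix m n ℝ} (hE : ∀ i a c, |E i a c| ≤ Δ i a c) (ξ : ι → n → ℝ) :
    H *ᵥ ∑ i, E i *ᵥ ξ i ≤ eabs H *ᵥ ∑ i, Δ i *ᵥ fun c => |ξ i c| :=
  (mulVec_le_eabs_mulVec_abs H _).trans (eabs_mulVec_mono H (abs_sum_mulVec_le hE ξ))

/-- The perturbation `E` with `|E| ≤ Δ` that maximizes `h ⬝ᵥ (E *ᵥ x)` when `0 ≤ Δ`. -/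
noncomputable def maximizingPerturbation (h : m → ℝ) (Δ : Matrix m n ℝ) (x : n → ℝ) :
    Matrix m n ℝ :=
  of fun a c => SignType.sign (h a) * SignType.sign (x c) * Δ a c

lemma abs_coe_sign_le_one (x : ℝ) : |(SignType.sign x : ℝ)| ≤ 1 := by
  cases SignType.sign x <;> simp

lemma abs_maximizingPerturbation_le (h : m → ℝ) {Δ : Matrix m n ℝ} (hΔ : ∀ a c, 0 ≤ Δ a c)
    (x : n → ℝ) (a : m) (c : n) : |maximizingPerturbation h Δ x a c| ≤ Δ a c := by
  rw [maximizingPerturbation, of_apply, abs_mul, abs_mul, abs_of_nonneg (hΔ a c)]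
  exact mul_le_of_le_one_left (hΔ a c) <|
    mul_le_one₀ (abs_coe_sign_le_one _) (abs_nonneg _) (abs_coe_sign_le_one _)

lemma dotProduct_mulVec_maximizingPerturbation [Fintype m] [Fintype n] (h : m → ℝ)
    (Δ : Matrix m n ℝ) (x : n → ℝ) :
    h ⬝ᵥ (maximizingPerturbation h Δ x *ᵥ x) = (fun a => |h a|) ⬝ᵥ (Δ *ᵥ fun c => |x c|) := by
  simp only [dotProduct, mulVec, maximizingPerturbation, of_apply, Finset.mul_sum]
  refine Finset.sum_congr rfl fun a _ => Finset.sum_congr rfl fun c _ => ?_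
  rw [← self_mul_sign (h a), ← self_mul_sign (x c)]
  ring

lemma mulVec_sum_maximizingPerturbation [Fintype ι] [Fintype m] [Fintype n] (H : Matrix p m ℝ)
    (k : p) (Δ : ι → Matrix m n ℝ) (ξ : ι → n → ℝ) :
    (H *ᵥ ∑ i, maximizingPerturbation (H k) (Δ i) (ξ i) *ᵥ ξ i) k
      = (eabs H *ᵥ ∑ i, Δ i *ᵥ fun c => |ξ i c|) k := by
  simp only [mulVec, dotProduct_sum]
  exact Finset.sum_congr rfl fun i _ => dotProduct_mulVec_maximizingPerturbation _ _ _

/-- With `ℬ = {Σᵢ Eᵢ ξᵢ : |Eᵢ| ≤ Δᵢ entrywise}`, the inclusion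
`{z} ⊕ ℬ ⊆ {x : Hx ≤ b}` holds if and only if
`Hz + |H| Σᵢ Δᵢ|ξᵢ| ≤ b` componentwise. -/
theorem constraint_tightening_iff {s n q r : ℕ}
    (H : Matrix (Fin s) (Fin n) ℝ) (b : Fin s → ℝ) (z : Fin n → ℝ)
    (Δ : Fin r → Matrix (Fin n) (Fin q) ℝ)
    (hΔ : ∀ i a c, 0 ≤ Δ i a c)
    (ξ : Fin r → Fin q → ℝ) :
    (∀ w ∈ {w : Fin n → ℝ | ∃ E : Fin r → Matrix (Fin n) (Fin q) ℝ,
        (∀ i a c, |E i a c| ≤ Δ i a c) ∧ w = ∑ i, (E i).mulVec (ξ i)},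
      H.mulVec (z + w) ≤ b)
    ↔ H.mulVec z + (eabs H).mulVec (∑ i, (Δ i).mulVec fun j => |ξ i j|) ≤ b := by
  constructor
  · intro hsub k
    have hk := hsub _ ⟨fun i => maximizingPerturbation (H k) (Δ i) (ξ i),
      fun i => abs_maximizingPerturbation_le (H k) (hΔ i) (ξ i), rfl⟩ k
    rwa [mulVec_add, Pi.add_apply, mulVec_sum_maximizingPerturbation] at hk
  · rintro hbound w ⟨E, hE, rfl⟩
    rw [mulVec_add]
    exact (add_le_add le_rfl (mulVec_sum_mulVec_le H hE ξ)).trans hbound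
end

section
/- Let Â_K ∈ ℝ^{n×n} and let Δ_K ∈ ℝ^{n×n} and Δ_S ∈ ℝ^{n×(n+m)} be entrywise nonnegative. Define F_j ∈ ℝ^{n×(n+m)} by F_0 = Δ_S and F_{j+1} = Δ_K Σ_{i=0}^{j} |Â_K^{j−i}| F_i for j ≥ 0, and define P_j ∈ ℝ^{n×n} by P_1 = I_n and P_{j+1} = |Â_K^{j}| + Σ_{h=1}^{j} P_h Δ_K |Â_K^{j−h}| for j ≥ 1. Then for every j ≥ 0, the quantity R_j = Σ_{i=0}^{j} |Â_K^{j−i}| F_i satisfies R_j = |Â_K^{j}| Δ_S + Σ_{i=1}^{j} |Â_K^{j−i}| Δ_K P_i Δ_S. -/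
open Finset PowerSeries

theorem Finset.sum_Icc_one_eq_sum_range {M : Type*} [AddCommMonoid M] (f : ℕ → M) (j : ℕ) :
    ∑ i ∈ Icc 1 j, f i = ∑ i ∈ range j, f (i + 1) := by
  rw [← Finset.Ico_add_one_right_eq_Icc, sum_Ico_eq_sum_range, Nat.add_sub_cancel]
  simp only [add_comm 1]

theorem eq_add_mul_mul_self_of_eq_add_self_mul_mul {S : Type*} [Ring S] {p u d : S}
    (hunit : IsUnit (1 - d * u)) (hp : p = u + p * d * u) : p = u + u * d * p := by
  have hp' : p * (1 - d * u) = u := by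
    rw [mul_sub, mul_one, ← mul_assoc, sub_eq_iff_eq_add]; exact hp
  have h : (p - u - u * d * p) * (1 - d * u) = 0 := by
    rw [sub_mul, sub_mul, mul_assoc, hp', mul_sub, mul_one]; noncomm_ring
  rw [hunit.mul_left_eq_zero, sub_sub, sub_eq_zero] at h
  exact h

theorem PowerSeries.coeff_mul_X_mul_C_mul {S : Type*} [Ring S] (f g : S⟦X⟧) (D : S) (j : ℕ) :
    coeff j (f * (X * C D) * g) = ∑ i ∈ Icc 1 j, coeff (i - 1) f * D * coeff (j - i) g := by
  rw [← mul_assoc, (commute_X f).eq, mul_assoc X, mul_assoc X]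
  cases j with
  | zero => simp
  | succ j =>
    rw [coeff_succ_X_mul, coeff_mul, Nat.sum_antidiagonal_eq_sum_range_succ
      (fun a c => coeff a (f * C D) * coeff c g), sum_Icc_one_eq_sum_range]
    simp only [coeff_mul_C, Nat.succ_sub_succ, Nat.sub_zero]

theorem eq_add_sum_mul_mul_self_of_eq_add_sum_self_mul_mul {S : Type*} [Ring S]
    {B P : ℕ → S} {D : S}
    (h : ∀ j, P (j + 1) = B j + ∑ i ∈ Icc 1 j, P i * D * B (j - i)) (j : ℕ) :
    P (j + 1) = B j + ∑ i ∈ Icc 1 j, B (j - i) * D * P i := by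
  set q : S⟦X⟧ := PowerSeries.mk fun j => P (j + 1)
  have coeff_q {j i : ℕ} (hi : i ∈ Icc 1 j) : coeff (i - 1) q = P i := by
    rw [coeff_mk, Nat.sub_add_cancel (mem_Icc.1 hi).1]
  have hq : q = PowerSeries.mk B + q * (X * C D) * PowerSeries.mk B := by
    ext j
    rw [map_add, coeff_mul_X_mul_C_mul, coeff_mk, coeff_mk, h]
    simp only [coeff_mk]
    exact congrArg _ (sum_congr rfl fun i hi => by rw [coeff_q hi])
  have hunit : IsUnit (1 - X * C D * PowerSeries.mk B) := isUnit_iff_constantCoeff.2 (by simp)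
  have hq' := congrArg (coeff j) (eq_add_mul_mul_self_of_eq_add_self_mul_mul hunit hq)
  rw [map_add, coeff_mul_X_mul_C_mul, coeff_mk, coeff_mk] at hq'
  simp only [coeff_mk] at hq'
  rw [hq']
  refine congrArg _ (sum_nbij' (fun i => j + 1 - i) (fun i => j + 1 - i) ?_ ?_ ?_ ?_ ?_)
    <;> intro i hi <;> rw [mem_Icc] at hi
  · exact mem_Icc.2 (by omega)
  · exact mem_Icc.2 (by omega)
  · omega
  · omega
  · rw [coeff_mk, show j - (j + 1 - i) = i - 1 by omega, show j - i + 1 = j + 1 - i by omega]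

theorem sum_range_mul_eq_mul_of_succ_eq {ι κ α : Type*} [Fintype ι] [Semiring α]
    {B P : ℕ → Matrix ι ι α} {D : Matrix ι ι α} {S₀ : Matrix ι κ α} {F : ℕ → Matrix ι κ α}
    (hF0 : F 0 = S₀) (hF : ∀ j, F (j + 1) = D * ∑ i ∈ range (j + 1), B (j - i) * F i)
    (hP : ∀ j, P (j + 1) = B j + ∑ i ∈ Icc 1 j, B (j - i) * D * P i) (j : ℕ) :
    ∑ i ∈ range (j + 1), B (j - i) * F i = P (j + 1) * S₀ := by
  induction j using Nat.strong_induction_on with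
  | _ j ih =>
    rw [sum_range_succ', hP, Matrix.add_mul, Matrix.sum_mul, sum_Icc_one_eq_sum_range, add_comm,
      hF0, Nat.sub_zero]
    congr 1
    refine sum_congr rfl fun i hi => ?_
    rw [hF, ih i (mem_range.1 hi), Matrix.mul_assoc, Matrix.mul_assoc]

theorem eabs_one {ι : Type*} [DecidableEq ι] : eabs (1 : Matrix ι ι ℝ) = 1 := by
  ext i j
  by_cases h : i = j <;> simp [eabs, Matrix.one_apply, h]

theorem R_closed_form_general {n m : ℕ}
    (AhatK ΔK : Matrix (Fin n) (Fin n) ℝ) (ΔS : Matrix (Fin n) (Fin (n + m)) ℝ)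
    (F : ℕ → Matrix (Fin n) (Fin (n + m)) ℝ)
    (hF0 : F 0 = ΔS)
    (hFs : ∀ j, F (j + 1) = ΔK * ∑ i ∈ Finset.range (j + 1), eabs (AhatK ^ (j - i)) * F i)
    (P : ℕ → Matrix (Fin n) (Fin n) ℝ)
    (hP1 : P 1 = 1)
    (hPs : ∀ j, 1 ≤ j →
      P (j + 1) = eabs (AhatK ^ j) + ∑ h ∈ Finset.Icc 1 j, P h * ΔK * eabs (AhatK ^ (j - h)))
    (R : ℕ → Matrix (Fin n) (Fin (n + m)) ℝ)
    (hR : ∀ j, R j = ∑ i ∈ Finset.range (j + 1), eabs (AhatK ^ (j - i)) * F i) :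
    ∀ j, R j = eabs (AhatK ^ j) * ΔS
      + ∑ i ∈ Finset.Icc 1 j, eabs (AhatK ^ (j - i)) * ΔK * P i * ΔS := by
  have hPleft : ∀ j, P (j + 1) =
      eabs (AhatK ^ j) + ∑ h ∈ Icc 1 j, P h * ΔK * eabs (AhatK ^ (j - h)) := by
    rintro (_ | j)
    · simp [hP1, eabs_one]
    · exact hPs (j + 1) j.succ_pos
  have hPright := eq_add_sum_mul_mul_self_of_eq_add_sum_self_mul_mul hPleft
  have hRP := sum_range_mul_eq_mul_of_succ_eq (B := fun k => eabs (AhatK ^ k)) hF0 hFs hPright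
  intro j
  rw [hR, hRP, hPright j, Matrix.add_mul, Matrix.sum_mul]

/-- With `F 0 = Δ_S`, `F (j+1) = Δ_K Σ_{i=0}^{j} |Ahat_K^{j−i}| F i`, `P 1 = I` and
`P (j+1) = |Ahat_K^j| + Σ_{h=1}^{j} P h Δ_K |Ahat_K^{j−h}|` for `j ≥ 1`, the quantity
`R j = Σ_{i=0}^{j} |Ahat_K^{j−i}| F i` satisfies
`R j = |Ahat_K^j| Δ_S + Σ_{i=1}^{j} |Ahat_K^{j−i}| Δ_K P i Δ_S` for every `j ≥ 0`. -/
theorem R_closed_form {n m : ℕ}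
    (AhatK ΔK : Matrix (Fin n) (Fin n) ℝ) (ΔS : Matrix (Fin n) (Fin (n + m)) ℝ)
    (hΔK : ∀ i j, 0 ≤ ΔK i j) (hΔS : ∀ i j, 0 ≤ ΔS i j)
    (F : ℕ → Matrix (Fin n) (Fin (n + m)) ℝ)
    (hF0 : F 0 = ΔS)
    (hFs : ∀ j, F (j + 1) = ΔK * ∑ i ∈ Finset.range (j + 1), eabs (AhatK ^ (j - i)) * F i)
    (P : ℕ → Matrix (Fin n) (Fin n) ℝ)
    (hP1 : P 1 = 1)
    (hPs : ∀ j, 1 ≤ j →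
      P (j + 1) = eabs (AhatK ^ j) + ∑ h ∈ Finset.Icc 1 j, P h * ΔK * eabs (AhatK ^ (j - h)))
    (R : ℕ → Matrix (Fin n) (Fin (n + m)) ℝ)
    (hR : ∀ j, R j = ∑ i ∈ Finset.range (j + 1), eabs (AhatK ^ (j - i)) * F i) :
    ∀ j, R j = eabs (AhatK ^ j) * ΔS
      + ∑ i ∈ Finset.Icc 1 j, eabs (AhatK ^ (j - i)) * ΔK * P i * ΔS :=
  R_closed_form_general AhatK ΔK ΔS F hF0 hFs P hP1 hPs R hR
end
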